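/- Let λ ∈ ℂ with λ ∉ 𝒮 and λ ≠ −α, suppose the polynomial 𝒫(ρ) := (e^{λτ₀}(λ+α)/2) ∏_{j=1}^{N}(ρ² − k_j(λ)²) + Σ_{i=1}^{N} c_i k_i(λ) ∏_{j≠i}(ρ² − k_j(λ)²) has 2N pairwise distinct roots ±ρ₁,…,±ρ_N, suppose k_j(λ) ≠ ±ρ_i for all i,j, and suppose det S(λ) = 0, where S(λ) = [[S⁻, S⁺],[S⁺, S⁻]] with (S⁻)_{j,i} = e^{ρ_i}/(k_j(λ) − ρ_i) and (S⁺)_{j,i} = e^{−ρ_i}/(k_j(λ) + ρ_i). Then there exists a continuous function q : [−1,1] → ℂ with q ≠ 0 and Δ(λ)q = 0; indeed, for any nonzero Γ = (γ₁,…,γ_N,γ_{−1},…,γ_{−N}) ∈ ℂ^{2N} with S(λ)Γ = 0, the function q_λ(x) := Σ_{i=1}^{N} [ γ_i e^{ρ_i x} + γ_{−i} e^{−ρ_i x} ] is nonzero and satisfies Δ(λ)q_λ = 0. -/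

import Mathlib

open Set

/-- The connectivity kernel `J₀(x,r) = Σᵢ cᵢ e^{−μᵢ|x−r|}`. -/
noncomputable def kerJ0 {N : ℕ} (c μ : Fin N → ℂ) (x r : ℝ) : ℂ :=
  ∑ i, c i * Complex.exp (-μ i * ((|x - r| : ℝ) : ℂ))

/-- The operator `Δ(λ)` acting on functions on `[-1,1]`. -/
noncomputable def DeltaOp {N : ℕ} (c μ : Fin N → ℂ) (τ0 : ℝ) (α lam : ℂ)
    (q : ℝ → ℂ) (x : ℝ) : ℂ :=
  (lam + α) * q x -
    ∫ r in (-1 : ℝ)..1,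
      kerJ0 c μ x r * Complex.exp (-lam * (τ0 : ℂ)) *
        Complex.exp (-lam * ((|x - r| : ℝ) : ℂ)) * q r

/-- The exceptional set `𝒮 = { λ : (λ+μᵢ)² = (λ+μⱼ)² for some i ≠ j }`. -/
def badSet {N : ℕ} (μ : Fin N → ℂ) : Set ℂ :=
  {lam : ℂ | ∃ i j : Fin N, i ≠ j ∧ (lam + μ i) ^ 2 = (lam + μ j) ^ 2}

/-- The characteristic polynomial
`𝒫(ρ) = (e^{λτ₀}(λ+α)/2)·∏ⱼ(ρ²−kⱼ²) + Σᵢ cᵢ kᵢ ∏_{j≠i}(ρ²−kⱼ²)`, `kᵢ = λ+μᵢ`. -/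
noncomputable def charP {N : ℕ} (c μ : Fin N → ℂ) (τ0 : ℝ) (α lam ρ : ℂ) : ℂ :=
  Complex.exp (lam * (τ0 : ℂ)) * (lam + α) / 2 * ∏ j, (ρ ^ 2 - (lam + μ j) ^ 2)
    + ∑ i, c i * (lam + μ i) * ∏ j ∈ Finset.univ.erase i, (ρ ^ 2 - (lam + μ j) ^ 2)

/-- The `2N×2N` block matrix `S(λ) = [[S⁻,S⁺],[S⁺,S⁻]]` with
`(S⁻)_{j,i} = e^{ρᵢ}/(kⱼ−ρᵢ)`, `(S⁺)_{j,i} = e^{−ρᵢ}/(kⱼ+ρᵢ)`. -/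
noncomputable def Smat {N : ℕ} (μ : Fin N → ℂ) (lam : ℂ) (ρ : Fin N → ℂ) :
    Matrix (Fin N ⊕ Fin N) (Fin N ⊕ Fin N) ℂ :=
  Matrix.fromBlocks
    (Matrix.of fun j i => Complex.exp (ρ i) / (lam + μ j - ρ i))
    (Matrix.of fun j i => Complex.exp (-ρ i) / (lam + μ j + ρ i))
    (Matrix.of fun j i => Complex.exp (-ρ i) / (lam + μ j + ρ i))
    (Matrix.of fun j i => Complex.exp (ρ i) / (lam + μ j - ρ i))

/-- The function `q_Γ(x) = Σᵢ (γᵢ e^{ρᵢx} + γ₋ᵢ e^{−ρᵢx})`. -/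
noncomputable def qGamma {N : ℕ} (ρ : Fin N → ℂ) (Γ : Fin N ⊕ Fin N → ℂ) (x : ℝ) : ℂ :=
  ∑ i, (Γ (Sum.inl i) * Complex.exp (ρ i * (x : ℂ)) +
    Γ (Sum.inr i) * Complex.exp (-ρ i * (x : ℂ)))

/-!
For `k ≠ ±ρ`, integrating `e^{-k|x-r|} e^{ρr}` over `[-1,1]` gives `2k/(k²-ρ²) e^{ρx}` plus two
boundary terms, proportional to `e^{-kx}` and `e^{kx}`. Summed over the exponentials of `q_Γ` with
`k = kⱼ(λ)`, the coefficients of these boundary terms are exactly the rows `j` of the two block rows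
of `S(λ)Γ`, so they vanish, and `Δ(λ)` multiplies each `e^{±ρₘx}` by
`(λ+α) - e^{-λτ₀} Σⱼ cⱼ 2kⱼ/(kⱼ²-ρₘ²)`, which is `𝒫(ρₘ)` divided by the nonzero factor
`e^{λτ₀}/2 · ∏ⱼ(ρₘ²-kⱼ²)`. Finally `q_Γ ≠ 0` because exponentials with the distinct exponents `±ρₘ`
are linearly independent: the derivatives at `0` of a vanishing combination form a Vandermonde
system.
-/

open Complex Filter Topology
open scoped Matrix

theorem hasDerivAt_cexp_const_mul_ofReal (b : ℂ) (x : ℝ) :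
    HasDerivAt (fun y : ℝ => cexp (b * y)) (b * cexp (b * x)) x := by
  simpa [mul_comm] using (((hasDerivAt_id (x : ℂ)).const_mul b).cexp).comp_ofReal

theorem iteratedDeriv_sum_mul_cexp {ι : Type*} [Fintype ι] (v b : ι → ℂ) (n : ℕ) :
    iteratedDeriv n (fun x : ℝ => ∑ j, v j * cexp (b j * x)) =
      fun x : ℝ => ∑ j, v j * b j ^ n * cexp (b j * x) := by
  induction n with
  | zero => simp
  | succ n ih =>
    funext x
    rw [iteratedDeriv_succ, ih]
    refine (HasDerivAt.fun_sum fun j _ => ?_).deriv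
    rw [show v j * b j ^ (n + 1) * cexp (b j * x) = v j * b j ^ n * (b j * cexp (b j * x)) by
      ring]
    exact (hasDerivAt_cexp_const_mul_ofReal (b j) x).const_mul (v j * b j ^ n)

theorem eq_zero_of_forall_sum_mul_pow_eq_zero {K ι : Type*} [Field K] [Fintype ι] {b : ι → K}
    (hb : Function.Injective b) {v : ι → K} (h : ∀ n : ℕ, ∑ j, v j * b j ^ n = 0) : v = 0 := by
  let e := Fintype.equivFin ι
  have hdet : (Matrix.vandermonde (b ∘ e.symm)).transpose.det ≠ 0 := by
    rw [Matrix.det_transpose]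
    exact Matrix.det_vandermonde_ne_zero_iff.mpr (hb.comp e.symm.injective)
  have hker : (Matrix.vandermonde (b ∘ e.symm)).transpose *ᵥ (v ∘ e.symm) = 0 := by
    funext n
    simpa [Matrix.mulVec, dotProduct, mul_comm, e.symm.sum_comp (fun j => v j * b j ^ (n : ℕ))]
      using h n
  funext j
  simpa using congrFun (Matrix.eq_zero_of_mulVec_eq_zero hdet hker) (e j)

theorem eq_zero_of_sum_mul_cexp_eq_zero {ι : Type*} [Fintype ι] {b : ι → ℂ}
    (hb : Function.Injective b) {v : ι → ℂ} {s : Set ℝ} {x₀ : ℝ} (hs : s ∈ 𝓝 x₀)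
    (h : ∀ x ∈ s, ∑ j, v j * cexp (b j * x) = 0) : v = 0 := by
  have hmoments : ∀ n : ℕ, ∑ j, v j * cexp (b j * x₀) * b j ^ n = 0 := by
    intro n
    have hzero : (fun x : ℝ => ∑ j, v j * cexp (b j * x)) =ᶠ[𝓝 x₀] fun _ => 0 :=
      Filter.eventually_of_mem hs h
    have := hzero.iteratedDeriv_eq n
    simp only [iteratedDeriv_sum_mul_cexp, iteratedDeriv_const, ite_self] at this
    simpa only [mul_right_comm _ (cexp _)] using this
  funext j
  simpa [exp_ne_zero] using congrFun (eq_zero_of_forall_sum_mul_pow_eq_zero hb hmoments) j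

theorem injective_sum_elim_neg {ι R : Type*} [Ring R] [NoZeroDivisors R] [CharZero R]
    {ρ : ι → R} (hρ0 : ∀ i, ρ i ≠ 0) (hρd : ∀ i j, i ≠ j → ρ i ≠ ρ j ∧ ρ i ≠ -ρ j) :
    Function.Injective (Sum.elim ρ (-ρ)) := by
  have hneg : ∀ i j, ρ i ≠ -ρ j := by
    intro i j hij
    obtain rfl | hne := eq_or_ne i j
    · exact hρ0 i (self_eq_neg.mp hij)
    · exact (hρd i j hne).2 hij
  have hinj : Function.Injective ρ := fun i j hij => by_contra fun hne => (hρd i j hne).1 hij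
  rintro (i | i) (j | j) hij
  · exact congrArg _ (hinj hij)
  · exact absurd hij (hneg i j)
  · exact absurd hij.symm (hneg j i)
  · exact congrArg _ (hinj (neg_inj.mp hij))

theorem qGamma_eq_sum {N : ℕ} (ρ : Fin N → ℂ) (Γ : Fin N ⊕ Fin N → ℂ) (x : ℝ) :
    qGamma ρ Γ x = ∑ s, Γ s * cexp (Sum.elim ρ (-ρ) s * x) := by
  simp [qGamma, Fintype.sum_sum_type, Finset.sum_add_distrib]

theorem exists_qGamma_ne_zero {N : ℕ} {ρ : Fin N → ℂ} (hρ0 : ∀ i, ρ i ≠ 0)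
    (hρd : ∀ i j, i ≠ j → ρ i ≠ ρ j ∧ ρ i ≠ -ρ j) {Γ : Fin N ⊕ Fin N → ℂ} (hΓ : Γ ≠ 0) :
    ∃ x ∈ Icc (-1 : ℝ) 1, qGamma ρ Γ x ≠ 0 := by
  by_contra! h
  refine hΓ (eq_zero_of_sum_mul_cexp_eq_zero (injective_sum_elim_neg hρ0 hρd)
    (Icc_mem_nhds (by norm_num : (-1 : ℝ) < 0) zero_lt_one) fun x hx => ?_)
  rw [← qGamma_eq_sum, h x hx]

section Integral

variable {k ρ : ℂ}

theorem integral_exp_neg_mul_sub_mul_exp (hkρ : k + ρ ≠ 0) (a x : ℝ) :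
    ∫ r in a..x, cexp (-k * (x - r : ℝ)) * cexp (ρ * r) =
      (cexp (ρ * x) - cexp (ρ * a - k * (x - a))) / (k + ρ) := by
  have hintegrand : ∀ r : ℝ, cexp (-k * (x - r : ℝ)) * cexp (ρ * r) =
      cexp (-k * x) * cexp ((k + ρ) * r) := fun r => by
    rw [← exp_add, ← exp_add]; push_cast; ring_nf
  simp only [hintegrand]
  rw [intervalIntegral.integral_const_mul, integral_exp_mul_complex hkρ, mul_div_assoc', mul_sub,
    ← exp_add, ← exp_add]
  congr 3 <;> ring

theorem integral_exp_neg_mul_sub_mul_exp' (hkρ : k - ρ ≠ 0) (x b : ℝ) :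
    ∫ r in x..b, cexp (-k * (r - x : ℝ)) * cexp (ρ * r) =
      (cexp (ρ * x) - cexp (ρ * b - k * (b - x))) / (k - ρ) := by
  have hintegrand : ∀ r : ℝ, cexp (-k * (r - x : ℝ)) * cexp (ρ * r) =
      cexp (k * x) * cexp ((ρ - k) * r) := fun r => by
    rw [← exp_add, ← exp_add]; push_cast; ring_nf
  have hρk : ρ - k ≠ 0 := sub_ne_zero.mpr (sub_ne_zero.mp hkρ).symm
  simp only [hintegrand]
  rw [intervalIntegral.integral_const_mul, integral_exp_mul_complex hρk, mul_div_assoc', mul_sub,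
    ← exp_add, ← exp_add, ← neg_sub k ρ, div_neg, ← neg_div, neg_sub]
  congr 3 <;> ring

theorem integral_exp_neg_mul_abs_sub_mul_exp (hkρ : k + ρ ≠ 0) (hkρ' : k - ρ ≠ 0) {a b x : ℝ}
    (hx : x ∈ Icc a b) :
    ∫ r in a..b, cexp (-k * |x - r|) * cexp (ρ * r) =
      2 * k / (k ^ 2 - ρ ^ 2) * cexp (ρ * x) - cexp (ρ * a - k * (x - a)) / (k + ρ)
        - cexp (ρ * b - k * (b - x)) / (k - ρ) := by
  have hcont : Continuous fun r : ℝ => cexp (-k * |x - r|) * cexp (ρ * r) := by fun_prop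
  rw [← intervalIntegral.integral_add_adjacent_intervals (b := x) (hcont.intervalIntegrable _ _)
    (hcont.intervalIntegrable _ _)]
  have hleft : ∫ r in a..x, cexp (-k * |x - r|) * cexp (ρ * r) =
      ∫ r in a..x, cexp (-k * (x - r : ℝ)) * cexp (ρ * r) :=
    intervalIntegral.integral_congr fun r hr => by
      rw [uIcc_of_le hx.1] at hr
      rw [abs_of_nonneg (sub_nonneg.mpr hr.2)]
  have hright : ∫ r in x..b, cexp (-k * |x - r|) * cexp (ρ * r) =
      ∫ r in x..b, cexp (-k * (r - x : ℝ)) * cexp (ρ * r) :=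
    intervalIntegral.integral_congr fun r hr => by
      rw [uIcc_of_le hx.2] at hr
      rw [abs_sub_comm, abs_of_nonneg (sub_nonneg.mpr hr.1)]
  rw [hleft, hright, integral_exp_neg_mul_sub_mul_exp hkρ, integral_exp_neg_mul_sub_mul_exp' hkρ']
  have hsq : k ^ 2 - ρ ^ 2 = (k + ρ) * (k - ρ) := by ring
  rw [hsq]
  field_simp
  ring

end Integral

theorem Smat_mulVec_inl {N : ℕ} (μ : Fin N → ℂ) (lam : ℂ) (ρ : Fin N → ℂ)
    (Γ : Fin N ⊕ Fin N → ℂ) (j : Fin N) :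
    (Smat μ lam ρ *ᵥ Γ) (Sum.inl j) = ∑ m, (cexp (ρ m) / (lam + μ j - ρ m) * Γ (Sum.inl m)
      + cexp (-ρ m) / (lam + μ j + ρ m) * Γ (Sum.inr m)) := by
  simp [Smat, Matrix.mulVec, dotProduct, Fintype.sum_sum_type, Finset.sum_add_distrib]

theorem Smat_mulVec_inr {N : ℕ} (μ : Fin N → ℂ) (lam : ℂ) (ρ : Fin N → ℂ)
    (Γ : Fin N ⊕ Fin N → ℂ) (j : Fin N) :
    (Smat μ lam ρ *ᵥ Γ) (Sum.inr j) = ∑ m, (cexp (-ρ m) / (lam + μ j + ρ m) * Γ (Sum.inl m)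
      + cexp (ρ m) / (lam + μ j - ρ m) * Γ (Sum.inr m)) := by
  simp [Smat, Matrix.mulVec, dotProduct, Fintype.sum_sum_type, Finset.sum_add_distrib]

theorem integral_exp_neg_mul_abs_sub_mul_qGamma {N : ℕ} (ρ : Fin N → ℂ) (Γ : Fin N ⊕ Fin N → ℂ)
    {k : ℂ} (hkρ : ∀ m, k + ρ m ≠ 0) (hkρ' : ∀ m, k - ρ m ≠ 0) {x : ℝ}
    (hx : x ∈ Icc (-1 : ℝ) 1) :
    ∫ r in (-1 : ℝ)..1, cexp (-k * |x - r|) * qGamma ρ Γ r =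
      ∑ m, 2 * k / (k ^ 2 - ρ m ^ 2) *
          (Γ (Sum.inl m) * cexp (ρ m * x) + Γ (Sum.inr m) * cexp (-ρ m * x))
        - cexp (-k) * (cexp (-k * x) * ∑ m, (cexp (-ρ m) / (k + ρ m) * Γ (Sum.inl m)
              + cexp (ρ m) / (k - ρ m) * Γ (Sum.inr m))
          + cexp (k * x) * ∑ m, (cexp (ρ m) / (k - ρ m) * Γ (Sum.inl m)
              + cexp (-ρ m) / (k + ρ m) * Γ (Sum.inr m))) := by
  have hcont : ∀ p : ℂ, Continuous fun r : ℝ => cexp (-k * |x - r|) * cexp (p * r) := by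
    intro p; fun_prop
  have hintegrand : ∀ r : ℝ, cexp (-k * |x - r|) * qGamma ρ Γ r =
      ∑ m, (Γ (Sum.inl m) * (cexp (-k * |x - r|) * cexp (ρ m * r))
        + Γ (Sum.inr m) * (cexp (-k * |x - r|) * cexp (-ρ m * r))) := fun r => by
    simp only [qGamma, Finset.mul_sum, mul_add, mul_left_comm]
  have hboundary : ∀ p : ℂ,
      cexp (p * ((-1 : ℝ) : ℂ) - k * (x - ((-1 : ℝ) : ℂ))) = cexp (-k) * cexp (-k * x) * cexp (-p) ∧
      cexp (p * ((1 : ℝ) : ℂ) - k * (((1 : ℝ) : ℂ) - x)) = cexp (-k) * cexp (k * x) * cexp p := by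
    intro p
    simp only [← exp_add]
    constructor <;> congr 1 <;> push_cast <;> ring
  have hterm : ∀ m, ∫ r in (-1 : ℝ)..1, (Γ (Sum.inl m) * (cexp (-k * |x - r|) * cexp (ρ m * r))
        + Γ (Sum.inr m) * (cexp (-k * |x - r|) * cexp (-ρ m * r))) =
      2 * k / (k ^ 2 - ρ m ^ 2) *
          (Γ (Sum.inl m) * cexp (ρ m * x) + Γ (Sum.inr m) * cexp (-ρ m * x))
        - cexp (-k) * (cexp (-k * x) * (cexp (-ρ m) / (k + ρ m) * Γ (Sum.inl m)
              + cexp (ρ m) / (k - ρ m) * Γ (Sum.inr m))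
          + cexp (k * x) * (cexp (ρ m) / (k - ρ m) * Γ (Sum.inl m)
              + cexp (-ρ m) / (k + ρ m) * Γ (Sum.inr m))) := fun m => by
    have hkρneg : k + -ρ m ≠ 0 := by rw [← sub_eq_add_neg]; exact hkρ' m
    have hkρneg' : k - -ρ m ≠ 0 := by rw [sub_neg_eq_add]; exact hkρ m
    rw [intervalIntegral.integral_add (((hcont _).intervalIntegrable _ _).const_mul _)
        (((hcont _).intervalIntegrable _ _).const_mul _),
      intervalIntegral.integral_const_mul, intervalIntegral.integral_const_mul,
      integral_exp_neg_mul_abs_sub_mul_exp (hkρ m) (hkρ' m) hx,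
      integral_exp_neg_mul_abs_sub_mul_exp hkρneg hkρneg' hx,
      (hboundary _).1, (hboundary _).2, (hboundary _).1, (hboundary _).2, neg_neg]
    ring
  simp only [hintegrand]
  rw [intervalIntegral.integral_finsetSum fun m _ =>
      (((hcont _).intervalIntegrable _ _).const_mul _).add
        (((hcont _).intervalIntegrable _ _).const_mul _),
    Finset.sum_congr rfl fun m _ => hterm m]
  simp only [Finset.mul_sum, ← Finset.sum_sub_distrib, ← Finset.sum_add_distrib]

noncomputable def deltaSymbol {N : ℕ} (c μ : Fin N → ℂ) (τ0 : ℝ) (α lam ρ : ℂ) : ℂ :=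
  (lam + α) - cexp (-lam * τ0) * ∑ j, c j * (2 * (lam + μ j) / ((lam + μ j) ^ 2 - ρ ^ 2))

theorem charP_eq_mul_deltaSymbol {N : ℕ} (c μ : Fin N → ℂ) (τ0 : ℝ) (α lam : ℂ) {ρ : ℂ}
    (hρ : ∀ j, ρ ^ 2 - (lam + μ j) ^ 2 ≠ 0) :
    charP c μ τ0 α lam ρ =
      cexp (lam * τ0) / 2 * (∏ j, (ρ ^ 2 - (lam + μ j) ^ 2)) * deltaSymbol c μ τ0 α lam ρ := by
  have herase : ∀ i, ∏ j ∈ Finset.univ.erase i, (ρ ^ 2 - (lam + μ j) ^ 2) =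
      (∏ j, (ρ ^ 2 - (lam + μ j) ^ 2)) / (ρ ^ 2 - (lam + μ i) ^ 2) := fun i =>
    eq_div_of_mul_eq (hρ i) (Finset.prod_erase_mul _ _ (Finset.mem_univ i))
  have hexp : cexp (lam * τ0) * cexp (-lam * τ0) = 1 := by rw [← exp_add]; simp
  have hswap : ∀ i, (lam + μ i) ^ 2 - ρ ^ 2 = -(ρ ^ 2 - (lam + μ i) ^ 2) := fun i => by ring
  set s := ∑ i, c i * (lam + μ i) / (ρ ^ 2 - (lam + μ i) ^ 2)
  have hcharP : ∑ i, c i * (lam + μ i) * ∏ j ∈ Finset.univ.erase i, (ρ ^ 2 - (lam + μ j) ^ 2) =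
      (∏ j, (ρ ^ 2 - (lam + μ j) ^ 2)) * s := by
    rw [Finset.mul_sum]; exact Finset.sum_congr rfl fun i _ => by rw [herase]; ring
  have hsymbol : ∑ j, c j * (2 * (lam + μ j) / ((lam + μ j) ^ 2 - ρ ^ 2)) = -(2 * s) := by
    rw [Finset.mul_sum, ← Finset.sum_neg_distrib]
    exact Finset.sum_congr rfl fun i _ => by rw [hswap, div_neg]; ring
  rw [charP, deltaSymbol, hcharP, hsymbol]
  linear_combination -(∏ j, (ρ ^ 2 - (lam + μ j) ^ 2)) * s * hexp

theorem deltaSymbol_eq_zero_of_charP_eq_zero {N : ℕ} {c μ : Fin N → ℂ} {τ0 : ℝ} {α lam ρ : ℂ}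
    (hρ : ∀ j, ρ ^ 2 - (lam + μ j) ^ 2 ≠ 0) (h : charP c μ τ0 α lam ρ = 0) :
    deltaSymbol c μ τ0 α lam ρ = 0 := by
  rw [charP_eq_mul_deltaSymbol c μ τ0 α lam hρ] at h
  exact (mul_eq_zero.mp h).resolve_left <| mul_ne_zero (div_ne_zero (exp_ne_zero _) two_ne_zero)
    (Finset.prod_ne_zero_iff.mpr fun j _ => hρ j)

theorem continuous_qGamma {N : ℕ} (ρ : Fin N → ℂ) (Γ : Fin N ⊕ Fin N → ℂ) :
    Continuous (qGamma ρ Γ) := by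
  unfold qGamma; fun_prop

theorem DeltaOp_qGamma {N : ℕ} (c μ : Fin N → ℂ) (τ0 : ℝ) (α lam : ℂ) {ρ : Fin N → ℂ}
    {Γ : Fin N ⊕ Fin N → ℂ} (hkρ : ∀ i j, lam + μ j ≠ ρ i ∧ lam + μ j ≠ -ρ i)
    (hΓ : Smat μ lam ρ *ᵥ Γ = 0) {x : ℝ} (hx : x ∈ Icc (-1 : ℝ) 1) :
    DeltaOp c μ τ0 α lam (qGamma ρ Γ) x = ∑ m, deltaSymbol c μ τ0 α lam (ρ m) *
      (Γ (Sum.inl m) * cexp (ρ m * x) + Γ (Sum.inr m) * cexp (-ρ m * x)) := by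
  have hcont : ∀ j, Continuous fun r : ℝ =>
      cexp (-(lam + μ j) * ((|x - r| : ℝ) : ℂ)) * qGamma ρ Γ r := fun j => by
    have := continuous_qGamma ρ Γ; fun_prop
  have hintegrand : ∀ r : ℝ, kerJ0 c μ x r * cexp (-lam * τ0) *
      cexp (-lam * ((|x - r| : ℝ) : ℂ)) * qGamma ρ Γ r =
      cexp (-lam * τ0) * ∑ j, c j * (cexp (-(lam + μ j) * ((|x - r| : ℝ) : ℂ)) * qGamma ρ Γ r) :=
    fun r => by
      simp only [kerJ0, Finset.sum_mul, Finset.mul_sum]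
      refine Finset.sum_congr rfl fun j _ => ?_
      rw [neg_add, add_mul, exp_add]
      ring
  have hconv : ∀ j, ∫ r in (-1 : ℝ)..1, cexp (-(lam + μ j) * ((|x - r| : ℝ) : ℂ)) * qGamma ρ Γ r =
      ∑ m, 2 * (lam + μ j) / ((lam + μ j) ^ 2 - ρ m ^ 2) *
        (Γ (Sum.inl m) * cexp (ρ m * x) + Γ (Sum.inr m) * cexp (-ρ m * x)) := fun j => by
    rw [integral_exp_neg_mul_abs_sub_mul_qGamma ρ Γ (fun m => ?_) (fun m => ?_) hx,
      ← Smat_mulVec_inl, ← Smat_mulVec_inr, hΓ]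
    · simp
    · exact fun h => (hkρ m j).2 (eq_neg_of_add_eq_zero_left h)
    · exact sub_ne_zero.mpr (hkρ m j).1
  simp only [DeltaOp, hintegrand, intervalIntegral.integral_const_mul]
  rw [intervalIntegral.integral_finsetSum fun j _ => ((hcont j).intervalIntegrable _ _).const_mul _]
  simp only [intervalIntegral.integral_const_mul, hconv]
  simp only [deltaSymbol, qGamma, sub_mul, Finset.sum_sub_distrib, Finset.mul_sum, Finset.sum_mul]
  rw [Finset.sum_comm]
  simp only [mul_assoc]

theorem stmt14_general (N : ℕ) (τ0 : ℝ) (α : ℂ)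
    (c μ : Fin N → ℂ)
    (lam : ℂ)
    (ρ : Fin N → ℂ)
    (hρ0 : ∀ i, ρ i ≠ 0)
    (hρd : ∀ i j, i ≠ j → ρ i ≠ ρ j ∧ ρ i ≠ -ρ j)
    (hroot : ∀ i, charP c μ τ0 α lam (ρ i) = 0)
    (hkρ : ∀ i j, lam + μ j ≠ ρ i ∧ lam + μ j ≠ -ρ i)
    (hdet : (Smat μ lam ρ).det = 0) :
    (∃ q : ℝ → ℂ, ContinuousOn q (Icc (-1) 1) ∧ (∃ x ∈ Icc (-1 : ℝ) 1, q x ≠ 0) ∧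
      ∀ x ∈ Icc (-1 : ℝ) 1, DeltaOp c μ τ0 α lam q x = 0) ∧
    ∀ Γ : Fin N ⊕ Fin N → ℂ, Γ ≠ 0 → (Smat μ lam ρ).mulVec Γ = 0 →
      (∃ x ∈ Icc (-1 : ℝ) 1, qGamma ρ Γ x ≠ 0) ∧
      ∀ x ∈ Icc (-1 : ℝ) 1, DeltaOp c μ τ0 α lam (qGamma ρ Γ) x = 0 := by
  have hsymbol : ∀ m, deltaSymbol c μ τ0 α lam (ρ m) = 0 := fun m => by
    have hρk : ∀ j, ρ m ^ 2 - (lam + μ j) ^ 2 ≠ 0 := fun j => sub_ne_zero.mpr fun h =>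
      (sq_eq_sq_iff_eq_or_eq_neg.mp h).elim (fun h => (hkρ m j).1 h.symm)
        (fun h => (hkρ m j).2 (neg_eq_iff_eq_neg.mp h.symm))
    exact deltaSymbol_eq_zero_of_charP_eq_zero hρk (hroot m)
  have hkernel : ∀ Γ : Fin N ⊕ Fin N → ℂ, Γ ≠ 0 → Smat μ lam ρ *ᵥ Γ = 0 →
      (∃ x ∈ Icc (-1 : ℝ) 1, qGamma ρ Γ x ≠ 0) ∧
      ∀ x ∈ Icc (-1 : ℝ) 1, DeltaOp c μ τ0 α lam (qGamma ρ Γ) x = 0 := fun Γ hΓ hSΓ =>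
    ⟨exists_qGamma_ne_zero hρ0 hρd hΓ, fun x hx => by
      simp [DeltaOp_qGamma c μ τ0 α lam hkρ hSΓ hx, hsymbol]⟩
  obtain ⟨Γ, hΓ, hSΓ⟩ := Matrix.exists_mulVec_eq_zero_iff.mpr hdet
  exact ⟨⟨qGamma ρ Γ, (continuous_qGamma ρ Γ).continuousOn, hkernel Γ hΓ hSΓ⟩, hkernel⟩

/-- Under the hypotheses of Statement 13, if moreover `det S(λ) = 0`,
then `Δ(λ)` has a nontrivial continuous null function; indeed for any nonzero `Γ` with
`S(λ)Γ = 0`, the function `q_Γ` is nonzero on `[−1,1]` and `Δ(λ)q_Γ = 0`. -/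
theorem stmt14 (N : ℕ) (hN : 1 ≤ N) (τ0 : ℝ) (hτ0 : 0 ≤ τ0) (α : ℂ)
    (c μ : Fin N → ℂ) (hc : ∀ i, c i ≠ 0) (hμ : Function.Injective μ)
    (lam : ℂ) (hlam : lam ∉ badSet μ) (hlamα : lam ≠ -α)
    (ρ : Fin N → ℂ)
    (hρ0 : ∀ i, ρ i ≠ 0)
    (hρd : ∀ i j, i ≠ j → ρ i ≠ ρ j ∧ ρ i ≠ -ρ j)
    (hroot : ∀ i, charP c μ τ0 α lam (ρ i) = 0)
    (hkρ : ∀ i j, lam + μ j ≠ ρ i ∧ lam + μ j ≠ -ρ i)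
    (hdet : (Smat μ lam ρ).det = 0) :
    (∃ q : ℝ → ℂ, ContinuousOn q (Icc (-1) 1) ∧ (∃ x ∈ Icc (-1 : ℝ) 1, q x ≠ 0) ∧
      ∀ x ∈ Icc (-1 : ℝ) 1, DeltaOp c μ τ0 α lam q x = 0) ∧
    ∀ Γ : Fin N ⊕ Fin N → ℂ, Γ ≠ 0 → (Smat μ lam ρ).mulVec Γ = 0 →
      (∃ x ∈ Icc (-1 : ℝ) 1, qGamma ρ Γ x ≠ 0) ∧
      ∀ x ∈ Icc (-1 : ℝ) 1, DeltaOp c μ τ0 α lam (qGamma ρ Γ) x = 0 :=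
  stmt14_general N τ0 α c μ lam ρ hρ0 hρd hroot hkρ hdet
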